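/- arXiv:hep-th/0203169 — 2 statements merged into one kernel-verified Lean document; each statement's English description precedes it below -/
import Mathlib

section
/- Let m ≥ 1 and define the m×m real matrix a as follows: for 1 ≤ j ≤ m−1, a_{jk} = 0 if j − k is even and a_{jk} = (−1)^{(j−k−1)/2}/(j−k) if j − k is odd; for the last row, a_{mk} = 0 if k is even and a_{mk} = (−1)^{(k−1)/2}/k if k is odd. Then −(2^{m−1}/π^m) det_m(a) = ((−1)^m/2) · ∏_{k=1}^{⌊m/2⌋} Γ(k)²/( Γ(k−1/2) Γ(k+1/2) ) · ∏_{k=1}^{⌊(m+1)/2⌋} Γ(k)²/( Γ(k−1/2) Γ(k+1/2) ), where Γ is the Euler Gamma function and ⌊·⌋ denotes the integer part. -/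
open Finset Matrix Real

/-!
Moving the last row of `a` to the top (a cyclic permutation of sign `(-1)^(m-1)`) turns it into
the Toeplitz matrix of `d ↦ xxSymbol (d - 1)`, whose entries vanish unless row and column have the
same parity. Splitting even and odd indices, the determinant factors into two determinants of the
Toeplitz matrix `[(-1)^(a-b) / (2(b-a) + 1)]`, of sizes `⌊(m+1)/2⌋` and `⌊m/2⌋`. Up to a diagonal
sign conjugation this is a Cauchy matrix on two arithmetic progressions, so one Schur-complement
step reproduces the same matrix one size smaller and multiplies the determinant by the Wallis
factor `W n`. Finally `Γ(k)² / (Γ(k - 1/2) Γ(k + 1/2)) = (2/π) W (k - 1)` by the functional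
equation.
-/

def finEvenOddEquiv (m : ℕ) : Fin ((m + 1) / 2) ⊕ Fin (m / 2) ≃ Fin m where
  toFun := Sum.elim (fun a => ⟨2 * a, by omega⟩) (fun b => ⟨2 * b + 1, by omega⟩)
  invFun i :=
    if h : (i : ℕ) % 2 = 0 then .inl ⟨i / 2, by omega⟩ else .inr ⟨i / 2, by omega⟩
  left_inv := by
    rintro (a | b) <;> simp [Fin.ext_iff]
    omega
  right_inv i := by
    by_cases h : (i : ℕ) % 2 = 0 <;> simp [h, Fin.ext_iff] <;> omega

namespace Matrix

def cauchy {K n : Type*} [Field K] (x y : n → K) : Matrix n n K := of fun i j => (x i - y j)⁻¹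

def toeplitz {R : Type*} {m : ℕ} (f : ℤ → R) : Matrix (Fin m) (Fin m) R :=
  of fun i j => f ((i : ℤ) - j)

theorem det_cauchy_succ {K : Type*} [Field K] {n : ℕ} (x y : Fin (n + 1) → K)
    (hxy : ∀ i j, x i ≠ y j) :
    (cauchy x y).det = (x 0 - y 0)⁻¹ * (∏ i : Fin n, (x 0 - x i.succ) / (x i.succ - y 0)) *
      (∏ j : Fin n, (y j.succ - y 0) / (x 0 - y j.succ)) *
      (cauchy (x ∘ Fin.succ) (y ∘ Fin.succ)).det := by
  have hne : ∀ i j, x i - y j ≠ 0 := fun i j => sub_ne_zero.2 (hxy i j)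
  -- Clearing the first column below the pivot leaves a Schur complement which is the smaller
  -- Cauchy matrix with rescaled rows and columns.
  let c : Fin (n + 1) → K := Fin.cons 0 fun i => (x 0 - y 0) / (x i.succ - y 0)
  let B : Matrix (Fin (n + 1)) (Fin (n + 1)) K :=
    of fun i j => cauchy x y i j - c i * cauchy x y 0 j
  have hB : (cauchy x y).det = B.det :=
    det_eq_of_forall_row_eq_smul_add_const c 0 rfl fun i j => by simp [B, c]
  have hB_col_zero : ∀ i : Fin n, B i.succ 0 = 0 := by
    intro i
    simp only [B, c, cauchy, of_apply, Fin.cons_succ]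
    field_simp [hne i.succ 0, hne 0 0]
    ring
  have hB_schur : B.submatrix Fin.succ Fin.succ = of fun i j =>
      (x 0 - x i.succ) / (x i.succ - y 0) * (of fun i j =>
        (y j.succ - y 0) / (x 0 - y j.succ) * cauchy (x ∘ Fin.succ) (y ∘ Fin.succ) i j) i j := by
    ext i j
    simp only [B, c, cauchy, of_apply, submatrix_apply, Fin.cons_succ, Function.comp_apply]
    field_simp [hne i.succ 0, hne 0 0, hne 0 j.succ, hne i.succ j.succ]
    ring
  rw [hB, det_succ_column_zero, Fin.sum_univ_succ]
  simp only [hB_col_zero, mul_zero, zero_mul, Finset.sum_const_zero, add_zero, Fin.val_zero,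
    pow_zero, one_mul, Fin.succAbove_zero]
  rw [hB_schur, det_mul_column, det_mul_row]
  simp [B, c, cauchy]
  ring

theorem det_toeplitz_of_odd {R : Type*} [CommRing R] {m : ℕ} (f : ℤ → R)
    (hf : ∀ d, Odd d → f d = 0) :
    (toeplitz (m := m) f).det =
      (toeplitz (m := (m + 1) / 2) fun d => f (2 * d)).det *
        (toeplitz (m := m / 2) fun d => f (2 * d)).det := by
  have hblocks : (toeplitz f).submatrix (finEvenOddEquiv m) (finEvenOddEquiv m) =
      fromBlocks (toeplitz fun d => f (2 * d)) 0 0 (toeplitz fun d => f (2 * d)) := by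
    ext (a | a) (b | b) <;>
      simp only [toeplitz, finEvenOddEquiv, submatrix_apply, Equiv.coe_fn_mk, Sum.elim_inl,
        Sum.elim_inr, of_apply, fromBlocks_apply₁₁, fromBlocks_apply₁₂, fromBlocks_apply₂₁,
        fromBlocks_apply₂₂, zero_apply]
    · congr 1; push_cast; ring
    · exact hf _ ⟨(a : ℤ) - b - 1, by push_cast; ring⟩
    · exact hf _ ⟨(a : ℤ) - b, by push_cast; ring⟩
    · congr 1; push_cast; ring
  rw [← det_submatrix_equiv_self (finEvenOddEquiv m), hblocks, det_fromBlocks_zero₂₁]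

end Matrix

/-- For `d ≠ 0` this is `sin (π d / 2) / d`. -/
noncomputable def xxSymbol (d : ℤ) : ℝ := if Even d then 0 else (-1) ^ ((d - 1) / 2) / d

theorem xxSymbol_neg (d : ℤ) : xxSymbol (-d) = xxSymbol d := by
  unfold xxSymbol
  rcases Int.even_or_odd d with hd | ⟨e, rfl⟩
  · simp [hd]
  · have hodd : ¬Even (2 * e + 1) := Int.not_even_iff_odd.2 ⟨e, rfl⟩
    rw [if_neg (by rwa [even_neg]), if_neg hodd,
      show (-(2 * e + 1) - 1) / 2 = -e - 1 by omega, show (2 * e + 1 - 1) / 2 = e by omega,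
      zpow_sub₀ (by norm_num), _root_.zpow_neg]
    have hsq : ((-1 : ℝ) ^ e) ^ 2 = 1 := by
      rw [← zpow_natCast, ← _root_.zpow_mul, mul_comm, _root_.zpow_mul]; norm_num
    have hne : (2 * e + 1 : ℝ) ≠ 0 := by exact_mod_cast (by omega : 2 * e + 1 ≠ 0)
    push_cast
    field_simp
    rw [hsq]

theorem xxSymbol_neg_natCast_add_one (k : ℕ) :
    xxSymbol (-((k : ℤ) + 1)) =
      if Even (k + 1) then 0 else (-1 : ℝ) ^ (k / 2) / ((k + 1 : ℕ) : ℝ) := by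
  rw [xxSymbol_neg, xxSymbol, show ((k : ℤ) + 1 - 1) / 2 = ((k / 2 : ℕ) : ℤ) by omega,
    zpow_natCast]
  norm_cast

theorem xxSymbol_two_mul_sub_one (e : ℤ) :
    xxSymbol (2 * e - 1) = (-1) ^ e * (1 - 2 * e : ℝ)⁻¹ := by
  have hodd : ¬Even (2 * e - 1) := Int.not_even_iff_odd.2 ⟨e - 1, by ring⟩
  rw [xxSymbol, if_neg hodd, show (2 * e - 1 - 1) / 2 = e - 1 by omega,
    zpow_sub_one₀ (by norm_num)]
  push_cast
  have : (2 * e - 1 : ℝ) ≠ 0 := by exact_mod_cast (by omega : 2 * e - 1 ≠ 0)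
  have : (1 - 2 * e : ℝ) ≠ 0 := by exact_mod_cast (by omega : 1 - 2 * e ≠ 0)
  field_simp
  ring

open Real.Wallis

theorem Gamma_sq_div_Gamma_mul_Gamma (n : ℕ) :
    Gamma ((n : ℝ) + 1) ^ 2 / (Gamma ((n : ℝ) + 1 / 2) * Gamma ((n : ℝ) + 3 / 2)) =
      2 / π * W n := by
  induction n with
  | zero =>
    have h : Gamma (3 / 2) = √π / 2 := by
      rw [show (3 / 2 : ℝ) = 1 / 2 + 1 by norm_num, Gamma_add_one (by norm_num),
        Gamma_one_half_eq]
      ring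
    simp only [CharP.cast_eq_zero, zero_add, Gamma_one, Gamma_one_half_eq, h, W, range_zero,
      prod_empty]
    field_simp
    rw [sq_sqrt pi_pos.le]
  | succ n ih =>
    have hΓ : ∀ s : ℝ, 0 < s → Gamma s ≠ 0 := fun s hs => (Gamma_pos_of_pos hs).ne'
    have h₁ : Gamma ((n : ℝ) + 1 + 1) = (n + 1) * Gamma (n + 1) := Gamma_add_one (by positivity)
    have h₂ : Gamma ((n : ℝ) + 1 + 1 / 2) = (n + 1 / 2) * Gamma (n + 1 / 2) := by
      rw [← Gamma_add_one (by positivity)]; ring_nf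
    have h₃ : Gamma ((n : ℝ) + 1 + 3 / 2) = (n + 3 / 2) * Gamma (n + 3 / 2) := by
      rw [← Gamma_add_one (by positivity)]; ring_nf
    have hW : W n = π / 2 * (Gamma (n + 1) ^ 2 / (Gamma (n + 1 / 2) * Gamma (n + 3 / 2))) := by
      rw [ih]; field_simp
    push_cast
    rw [h₁, h₂, h₃, W_succ, hW]
    field_simp [hΓ (n + 1) (by positivity), hΓ (n + 1 / 2) (by positivity),
      hΓ (n + 3 / 2) (by positivity)]

theorem prod_Gamma_sq_div_Gamma_mul_Gamma (n : ℕ) :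
    ∏ k ∈ Icc 1 n, Gamma (k : ℝ) ^ 2 / (Gamma ((k : ℝ) - 1 / 2) * Gamma ((k : ℝ) + 1 / 2)) =
      (2 / π) ^ n * ∏ j ∈ range n, W j := by
  induction n with
  | zero => simp
  | succ n ih =>
    rw [prod_Icc_succ_top (by omega), ih, prod_range_succ, pow_succ (2 / π) n, Nat.cast_succ,
      show (n : ℝ) + 1 - 1 / 2 = n + 1 / 2 by ring, show (n : ℝ) + 1 + 1 / 2 = n + 3 / 2 by ring,
      Gamma_sq_div_Gamma_mul_Gamma]
    ring

theorem det_cauchy_neg_two_mul (n : ℕ) :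
    (Matrix.cauchy (fun a : Fin n => -(2 * (a : ℝ))) fun b => -(2 * (b : ℝ) + 1)).det =
      ∏ j ∈ range n, W j := by
  induction n with
  | zero => simp
  | succ n ih =>
    have hxy : ∀ i j : Fin (n + 1), -(2 * (i : ℝ)) ≠ -(2 * (j : ℝ) + 1) := by
      intro i j h
      have : 2 * (i : ℕ) = 2 * (j : ℕ) + 1 := by exact_mod_cast neg_inj.1 h
      omega
    -- the points form arithmetic progressions, so dropping the first ones is a translation
    have hshift : Matrix.cauchy ((fun a : Fin (n + 1) => -(2 * (a : ℝ))) ∘ Fin.succ)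
        ((fun b : Fin (n + 1) => -(2 * (b : ℝ) + 1)) ∘ Fin.succ) =
        Matrix.cauchy (fun a : Fin n => -(2 * (a : ℝ))) fun b => -(2 * (b : ℝ) + 1) := by
      ext i j
      simp only [Matrix.cauchy, of_apply, Function.comp_apply, Fin.val_succ]
      push_cast
      ring_nf
    rw [det_cauchy_succ _ _ hxy, hshift, ih, prod_range_succ, mul_comm]
    congr 1
    rw [W, ← Fin.prod_univ_eq_prod_range, mul_assoc, ← prod_mul_distrib]
    norm_num
    refine prod_congr rfl fun i _ => ?_
    rw [show -(2 * ((i : ℝ) + 1)) + 1 = -(2 * i + 1) by ring, div_neg, neg_div, neg_mul_neg]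
    ring

theorem det_toeplitz_xxSymbol_two_mul_sub_one (n : ℕ) :
    (toeplitz (m := n) fun d => xxSymbol (2 * d - 1)).det = ∏ j ∈ range n, W j := by
  have h : (toeplitz (m := n) fun d => xxSymbol (2 * d - 1)) =
      of fun i j : Fin n => (-1 : ℝ) ^ (i : ℕ) * (of fun i j : Fin n => (-1 : ℝ) ^ (j : ℕ) *
        Matrix.cauchy (fun a : Fin n => -(2 * (a : ℝ))) (fun b => -(2 * (b : ℝ) + 1)) i j) i j := by
    ext i j
    simp only [toeplitz, Matrix.cauchy, of_apply, xxSymbol_two_mul_sub_one]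
    rw [zpow_sub₀ (by norm_num), zpow_natCast, zpow_natCast, div_eq_mul_inv, ← inv_pow,
      inv_neg_one]
    push_cast
    ring
  rw [h, det_mul_column, det_mul_row, det_cauchy_neg_two_mul, ← mul_assoc, ← prod_mul_distrib]
  simp [← pow_add, ← two_mul, pow_mul]

theorem det_toeplitz_xxSymbol_sub_one (m : ℕ) :
    (toeplitz (m := m) fun d => xxSymbol (d - 1)).det =
      (∏ j ∈ range ((m + 1) / 2), W j) * ∏ j ∈ range (m / 2), W j := by
  rw [det_toeplitz_of_odd, det_toeplitz_xxSymbol_two_mul_sub_one,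
    det_toeplitz_xxSymbol_two_mul_sub_one]
  intro d hd
  rw [xxSymbol, if_pos (by simpa [Int.even_sub_one] using hd)]

/-- Exact evaluation of the zero-field XX-chain correlation function `⟨σ₁⁺σ_{m+1}⁻⟩`:
`-(2^{m-1}/π^m) det_m(a)` equals a finite product of Gamma functions
(rows and columns of `a` are 1-indexed). -/
theorem stmt14 (m : ℕ) (hm : 1 ≤ m) (A : Matrix (Fin m) (Fin m) ℝ)
    (hA : ∀ j k : Fin m, A j k =
      if (j : ℕ) + 1 < m then
        (if Even ((j : ℤ) - (k : ℤ)) then 0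
          else (-1 : ℝ) ^ (((j : ℤ) - (k : ℤ) - 1) / 2) / ((((j : ℤ) - (k : ℤ)) : ℤ) : ℝ))
      else
        (if Even ((k : ℕ) + 1) then 0
          else (-1 : ℝ) ^ (((k : ℕ) : ℕ) / 2) / (((k : ℕ) + 1 : ℕ) : ℝ))) :
    -((2 : ℝ) ^ (m - 1) / π ^ m) * A.det =
      ((-1 : ℝ) ^ m / 2) *
        (∏ k ∈ Finset.Icc 1 (m / 2), Real.Gamma (k : ℝ) ^ 2 /
            (Real.Gamma ((k : ℝ) - 1 / 2) * Real.Gamma ((k : ℝ) + 1 / 2))) *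
        ∏ k ∈ Finset.Icc 1 ((m + 1) / 2), Real.Gamma (k : ℝ) ^ 2 /
            (Real.Gamma ((k : ℝ) - 1 / 2) * Real.Gamma ((k : ℝ) + 1 / 2)) := by
  obtain ⟨m, rfl⟩ : ∃ m', m = m' + 1 := ⟨m - 1, by omega⟩
  have hA' : A = (toeplitz fun d => xxSymbol (d - 1)).submatrix (finRotate (m + 1)) id := by
    ext j k
    rw [hA]
    simp only [submatrix_apply, toeplitz, of_apply, id]
    rcases eq_or_ne j (Fin.last m) with rfl | hj
    · rw [if_neg (by simp), finRotate_last, Fin.val_zero, ← xxSymbol_neg_natCast_add_one]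
      congr 1
      push_cast
      ring
    · rw [if_pos (by simpa using Fin.val_lt_last hj), coe_finRotate_of_ne_last hj,
        Nat.cast_succ, add_sub_right_comm, add_sub_cancel_right]
      rfl
  have hpow : (2 / π) ^ ((m + 1) / 2) * (2 / π) ^ ((m + 1 + 1) / 2) =
      2 ^ (m + 1) / π ^ (m + 1) := by
    rw [← pow_add, show (m + 1) / 2 + (m + 1 + 1) / 2 = m + 1 by omega, div_pow]
  rw [hA', det_permute, sign_finRotate, det_toeplitz_xxSymbol_sub_one,
    prod_Gamma_sq_div_Gamma_mul_Gamma, prod_Gamma_sq_div_Gamma_mul_Gamma,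
    show m + 1 - 1 = m by omega]
  push_cast
  calc
    _ = (-1) ^ (m + 1) / 2 * ((2 / π) ^ ((m + 1) / 2) * (2 / π) ^ ((m + 1 + 1) / 2)) *
        ((∏ j ∈ range ((m + 1 + 1) / 2), W j) * ∏ j ∈ range ((m + 1) / 2), W j) := by
      rw [hpow]; field_simp; ring
    _ = _ := by ring
end

section
/- For integers N ≥ 1, define φ_N = −∑_{k=1}^N log( Γ(k)² / ( Γ(k − 1/2) Γ(k + 1/2) ) ) and let C = −(1/4) ∫_0^∞ (1/t)( e^{−4t} − 1/cosh²(t) ) dt. Then lim_{N→∞} N² ( φ_N − (1/4) log N − C ) = 1/64. -/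
/-!
The `k`-th summand `log (Γ(k - 1/2) Γ(k + 1/2) / Γ(k)²)` of `φ_N` equals
`∫₀^∞ e^{-(4k-2)t} tanh t dt / t`: both sides decrease by `log (k² / ((k - 1/2)(k + 1/2)))` when
`k` is replaced by `k + 1` (by `Γ(x + 1) = x Γ(x)`, resp. by Frullani's integral, since
`(e^{2t} - e^{-2t}) tanh t = e^{2t} - 2 + e^{-2t}`), and both tend to `0` (by Wallis' product,
resp. by the bound `tanh t ≤ t`). The sum over `k ≤ N` telescopes to
`(1/4) ∫₀^∞ (1 - e^{-4Nt}) dt / (t cosh² t)`, and once `log N` is also written as a Frullani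
integral, `φ_N - (1/4) log N - C = (1/4) ∫₀^∞ e^{-4Nt} tanh² t dt / t`. After the substitution
`t = u / (4N)` the integrand is dominated by `u e^{-u}` and converges pointwise because
`tanh x ~ x` at `0`, so `N² (φ_N - (1/4) log N - C) → (1/64) ∫₀^∞ u e^{-u} du = 1/64`.
-/

open Real MeasureTheory Set Filter Topology

namespace Real

@[fun_prop]
theorem continuous_tanh : Continuous tanh := by
  simp_rw [funext tanh_eq_sinh_div_cosh]
  exact continuous_sinh.div continuous_cosh fun x ↦ (cosh_pos x).ne'

theorem one_div_cosh_sq (x : ℝ) : 1 / cosh x ^ 2 = 1 - tanh x ^ 2 := by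
  have := cosh_sq x
  rw [tanh_eq_sinh_div_cosh]
  field_simp
  linarith

theorem hasDerivAt_tanh (x : ℝ) : HasDerivAt tanh (1 / cosh x ^ 2) x := by
  have h := (hasDerivAt_sinh x).div (hasDerivAt_cosh x) (cosh_pos x).ne'
  rw [show tanh = sinh / cosh from funext tanh_eq_sinh_div_cosh]
  refine h.congr_deriv ?_
  rw [← cosh_sq_sub_sinh_sq x]
  ring

theorem tanh_nonneg {x : ℝ} (hx : 0 ≤ x) : 0 ≤ tanh x := by
  rw [tanh_eq_sinh_div_cosh]
  exact div_nonneg (sinh_nonneg_iff.2 hx) (cosh_pos x).le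

theorem tanh_le_self {x : ℝ} (hx : 0 ≤ x) : tanh x ≤ x := by
  have hmono : Monotone fun y ↦ y - tanh y :=
    monotone_of_hasDerivAt_nonneg (fun y ↦ (hasDerivAt_id y).sub (hasDerivAt_tanh y))
      fun y ↦ sub_nonneg.2 <| by simpa using inv_le_one_of_one_le₀ (one_le_pow₀ (one_le_cosh y))
  simpa using hmono hx

theorem tanh_pow_div_le_one {n : ℕ} (hn : n ≠ 0) {t : ℝ} (ht : 0 < t) : tanh t ^ n / t ≤ 1 := by
  rw [div_le_one ht]
  calc tanh t ^ n ≤ tanh t := pow_le_of_le_one (tanh_nonneg ht.le) (tanh_lt_one t).le hn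
    _ ≤ t := tanh_le_self ht.le

theorem tendsto_tanh_div_self : Tendsto (fun x ↦ tanh x / x) (𝓝[≠] 0) (𝓝 1) := by
  simpa [funext (slope_def_field tanh 0)] using hasDerivAt_iff_tendsto_slope.1 (hasDerivAt_tanh 0)

theorem mul_tanh_div_le {s u : ℝ} (hs : 0 < s) (hu : 0 ≤ u) : s * tanh (u / s) ≤ u :=
  calc s * tanh (u / s) ≤ s * (u / s) := by gcongr; exact tanh_le_self (div_nonneg hu hs.le)
    _ = u := mul_div_cancel₀ _ hs.ne'

theorem tendsto_mul_tanh_div_atTop (u : ℝ) : Tendsto (fun s ↦ s * tanh (u / s)) atTop (𝓝 u) := by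
  rcases eq_or_ne u 0 with rfl | hu
  · simp
  have harg : Tendsto (fun s ↦ u / s) atTop (𝓝[≠] 0) :=
    tendsto_nhdsWithin_iff.2 ⟨tendsto_const_nhds.div_atTop tendsto_id,
      (eventually_gt_atTop 0).mono fun s hs ↦ div_ne_zero hu hs.ne'⟩
  have h := (tendsto_tanh_div_self.comp harg).const_mul u
  rw [mul_one] at h
  refine h.congr' ((eventually_gt_atTop 0).mono fun s hs ↦ ?_)
  simp only [Function.comp_apply]
  field_simp

theorem tanh_mul_four_mul_cosh_sq (x : ℝ) :
    tanh x * (4 * cosh x ^ 2) = exp (2 * x) - exp (-(2 * x)) := by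
  have := exp_pos x
  rw [tanh_eq_sinh_div_cosh, sinh_eq, cosh_eq, exp_neg, exp_neg,
    show exp (2 * x) = exp x ^ 2 by rw [sq, ← exp_add, two_mul]]
  field_simp
  ring

theorem exp_two_mul_sub_exp_neg_two_mul_mul_tanh (x : ℝ) :
    (exp (2 * x) - exp (-(2 * x))) * tanh x = exp (2 * x) - 2 + exp (-(2 * x)) := by
  have := exp_pos x
  rw [tanh_eq, exp_neg, exp_neg, show exp (2 * x) = exp x ^ 2 by rw [sq, ← exp_add, two_mul]]
  field_simp
  ring

theorem exp_neg_mul_mul_tanh (s t : ℝ) :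
    exp (-(s + 2) * t) * tanh t = (exp (-s * t) - exp (-(s + 4) * t)) / (4 * cosh t ^ 2) := by
  rw [eq_div_iff (by positivity), mul_assoc, tanh_mul_four_mul_cosh_sq, mul_sub, ← exp_add,
    ← exp_add]
  ring_nf

theorem exp_neg_mul_sub_mul_tanh (s t : ℝ) :
    (exp (-(s - 2) * t) - exp (-(s + 2) * t)) * tanh t
      = (exp (-(s - 2) * t) - exp (-s * t)) - (exp (-s * t) - exp (-(s + 2) * t)) := by
  have h₁ : exp (-(s - 2) * t) = exp (-s * t) * exp (2 * t) := by rw [← exp_add]; ring_nf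
  have h₂ : exp (-(s + 2) * t) = exp (-s * t) * exp (-(2 * t)) := by rw [← exp_add]; ring_nf
  rw [h₁, h₂]
  linear_combination exp (-s * t) * exp_two_mul_sub_exp_neg_two_mul_mul_tanh t

end Real

theorem integrableOn_Ioi_of_abs_le_exp {f : ℝ → ℝ} {a c K : ℝ} (hf : ContinuousOn f (Ioi a))
    (hc : 0 < c) (hbound : ∀ t ∈ Ioi a, |f t| ≤ K * exp (-c * t)) : IntegrableOn f (Ioi a) :=
  ((exp_neg_integrableOn_Ioi a hc).const_mul K).mono' (hf.aestronglyMeasurable measurableSet_Ioi)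
    ((ae_restrict_iff' measurableSet_Ioi).2 (ae_of_all _ hbound))

theorem integrableOn_exp_neg_mul_mul_tanh_pow_div {s : ℝ} (hs : 0 < s) {n : ℕ} (hn : n ≠ 0) :
    IntegrableOn (fun t ↦ exp (-s * t) * tanh t ^ n / t) (Ioi 0) := by
  refine integrableOn_Ioi_of_abs_le_exp (K := 1) ?_ hs fun t (ht : 0 < t) ↦ ?_
  · exact (Continuous.continuousOn (by fun_prop)).div continuousOn_id fun t ht ↦ ht.ne'
  · rw [mul_div_assoc, abs_of_nonneg (by have := tanh_nonneg ht.le; positivity), one_mul]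
    exact mul_le_of_le_one_right (exp_pos _).le (tanh_pow_div_le_one hn ht)

theorem integrableOn_exp_neg_mul_sub_exp_neg_mul_div {a b : ℝ} (ha : 0 < a) (hb : 0 < b) :
    IntegrableOn (fun t ↦ (exp (-a * t) - exp (-b * t)) / t) (Ioi 0) := by
  wlog hab : a ≤ b generalizing a b
  · exact (this hb ha (le_of_not_ge hab)).neg.congr_fun
      (fun t _ ↦ by simp only [Pi.neg_apply]; ring) measurableSet_Ioi
  refine integrableOn_Ioi_of_abs_le_exp (K := b - a) ?_ ha fun t (ht : 0 < t) ↦ ?_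
  · exact (Continuous.continuousOn (by fun_prop)).div continuousOn_id fun t ht ↦ ht.ne'
  have hsplit : exp (-a * t) - exp (-b * t) = exp (-a * t) * (1 - exp (-((b - a) * t))) := by
    rw [mul_sub, mul_one, ← exp_add]
    ring_nf
  have hle : 1 - exp (-((b - a) * t)) ≤ (b - a) * t := by
    linarith [add_one_le_exp (-((b - a) * t))]
  have hnonneg : 0 ≤ 1 - exp (-((b - a) * t)) :=
    sub_nonneg.2 (exp_le_one_iff.2 (by nlinarith))
  rw [abs_of_nonneg (div_nonneg (hsplit ▸ mul_nonneg (exp_pos _).le hnonneg) ht.le),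
    div_le_iff₀ ht, hsplit]
  calc exp (-a * t) * (1 - exp (-((b - a) * t))) ≤ exp (-a * t) * ((b - a) * t) := by gcongr
    _ = (b - a) * exp (-a * t) * t := by ring

theorem integral_exp_neg_mul_sub_exp_neg_mul_div {a b : ℝ} (ha : 0 < a) (hb : 0 < b) :
    ∫ t in Ioi 0, (exp (-a * t) - exp (-b * t)) / t = log (b / a) := by
  have hcont : Continuous fun x : ℝ ↦ exp (-x) := by fun_prop
  have h := Frullani.integral_Ioi_eq (f := fun x ↦ exp (-x)) (L := 1) (R := 0)
    (hcont.locallyIntegrable.locallyIntegrableOn _) ha hb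
    (by simpa using (hcont.tendsto 0).mono_left nhdsWithin_le_nhds)
    tendsto_exp_neg_atTop_nhds_zero
    (by simpa [div_eq_inv_mul] using integrableOn_exp_neg_mul_sub_exp_neg_mul_div ha hb)
  simpa [div_eq_inv_mul] using h

theorem integral_comp_mul_div_Ioi (f : ℝ → ℝ) {c : ℝ} (hc : 0 < c) :
    ∫ t in Ioi 0, f (c * t) / t = ∫ t in Ioi 0, f t / t := by
  have h := integral_comp_mul_left_Ioi (fun u ↦ f u / u) 0 hc
  simp only [mul_zero, smul_eq_mul] at h
  calc ∫ t in Ioi 0, f (c * t) / t = ∫ t in Ioi 0, c * (f (c * t) / (c * t)) := by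
        congr with t
        rw [← mul_div_assoc, mul_div_mul_left _ _ hc.ne']
    _ = ∫ t in Ioi 0, f t / t := by rw [integral_const_mul, h, mul_inv_cancel_left₀ hc.ne']

theorem integrableOn_exp_neg_mul_self : IntegrableOn (fun u ↦ exp (-u) * u) (Ioi 0) := by
  simpa [show (2 : ℝ) - 1 = 1 by norm_num] using GammaIntegral_convergent two_pos

theorem integral_exp_neg_mul_self : ∫ u in Ioi 0, exp (-u) * u = 1 := by
  simpa [show (2 : ℝ) - 1 = 1 by norm_num, Gamma_two] using (Gamma_eq_integral two_pos).symm

noncomputable def gammaRatio (x : ℝ) : ℝ := Gamma (x - 1 / 2) * Gamma (x + 1 / 2) / Gamma x ^ 2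

theorem gammaRatio_add_one {x : ℝ} (hx : 1 / 2 < x) :
    gammaRatio (x + 1) = gammaRatio x * ((x - 1 / 2) * (x + 1 / 2) / x ^ 2) := by
  have hΓ : Gamma x ≠ 0 := (Gamma_pos_of_pos (by linarith)).ne'
  rw [gammaRatio, gammaRatio, show x + 1 - 1 / 2 = x - 1 / 2 + 1 by ring,
    show x + 1 + 1 / 2 = x + 1 / 2 + 1 by ring, Gamma_add_one (by linarith),
    Gamma_add_one (by linarith), Gamma_add_one (by linarith)]
  field_simp

theorem log_gammaRatio_sub_log_gammaRatio_add_one {x : ℝ} (hx : 1 / 2 < x) :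
    log (gammaRatio x) - log (gammaRatio (x + 1)) = log (x ^ 2 / ((x - 1 / 2) * (x + 1 / 2))) := by
  have h₁ : 0 < x - 1 / 2 := by linarith
  have h₂ : 0 < x := by linarith
  have hpos : 0 < gammaRatio x := by
    have := Gamma_pos_of_pos h₁
    have := Gamma_pos_of_pos (by linarith : 0 < x + 1 / 2)
    unfold gammaRatio
    positivity
  have hfac : 0 < (x - 1 / 2) * (x + 1 / 2) / x ^ 2 := by positivity
  rw [gammaRatio_add_one hx, log_mul hpos.ne' hfac.ne', ← inv_div, log_inv]
  ring

theorem gammaRatio_natCast_add_one_mul_wallis (n : ℕ) :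
    gammaRatio (n + 1) * Wallis.W n = π / 2 := by
  induction n with
  | zero =>
    have h : Gamma (3 / 2) = 1 / 2 * √π := by
      rw [show (3 / 2 : ℝ) = 1 / 2 + 1 by norm_num, Gamma_add_one (by norm_num),
        Gamma_one_half_eq]
    norm_num [gammaRatio, Wallis.W, Gamma_one_half_eq, h]
    linear_combination (1 / 2 : ℝ) * mul_self_sqrt pi_pos.le
  | succ n ih =>
    rw [Nat.cast_succ, gammaRatio_add_one (by linarith [(n.cast_nonneg : (0 : ℝ) ≤ n)]),
      Wallis.W_succ, ← ih]
    field_simp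
    ring

theorem tendsto_gammaRatio_natCast_add_one :
    Tendsto (fun n : ℕ ↦ gammaRatio (n + 1)) atTop (𝓝 1) := by
  have h := (tendsto_const_nhds (x := π / 2)).div Wallis.tendsto_W_nhds_pi_div_two
    (by positivity)
  rw [div_self (by positivity)] at h
  refine h.congr fun n ↦ ?_
  rw [Pi.div_apply, div_eq_iff (Wallis.W_pos n).ne', gammaRatio_natCast_add_one_mul_wallis]

noncomputable def gammaRatioIntegral (x : ℝ) : ℝ :=
  ∫ t in Ioi 0, exp (-(4 * x - 2) * t) * tanh t / t

theorem integrableOn_gammaRatioIntegrand {x : ℝ} (hx : 1 / 2 < x) :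
    IntegrableOn (fun t ↦ exp (-(4 * x - 2) * t) * tanh t / t) (Ioi 0) := by
  simpa using integrableOn_exp_neg_mul_mul_tanh_pow_div (s := 4 * x - 2) (by linarith) one_ne_zero

theorem gammaRatioIntegral_sub_gammaRatioIntegral_add_one {x : ℝ} (hx : 1 / 2 < x) :
    gammaRatioIntegral x - gammaRatioIntegral (x + 1)
      = log (x ^ 2 / ((x - 1 / 2) * (x + 1 / 2))) := by
  have hpt (t : ℝ) :
      exp (-(4 * x - 2) * t) * tanh t / t - exp (-(4 * (x + 1) - 2) * t) * tanh t / t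
        = (exp (-(4 * x - 2) * t) - exp (-(4 * x) * t)) / t
          - (exp (-(4 * x) * t) - exp (-(4 * x + 2) * t)) / t := by
    rw [show 4 * (x + 1) - 2 = 4 * x + 2 by ring, div_sub_div_same, div_sub_div_same, ← sub_mul,
      exp_neg_mul_sub_mul_tanh]
  have ha : 0 < 4 * x - 2 := by linarith
  have hb : 0 < 4 * x := by linarith
  have hc : 0 < 4 * x + 2 := by linarith
  rw [gammaRatioIntegral, gammaRatioIntegral, ← integral_sub (integrableOn_gammaRatioIntegrand hx)
    (integrableOn_gammaRatioIntegrand (by linarith)), funext hpt,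
    integral_sub (integrableOn_exp_neg_mul_sub_exp_neg_mul_div ha hb)
      (integrableOn_exp_neg_mul_sub_exp_neg_mul_div hb hc),
    integral_exp_neg_mul_sub_exp_neg_mul_div ha hb, integral_exp_neg_mul_sub_exp_neg_mul_div hb hc,
    ← log_div (by positivity) (by positivity)]
  congr 1
  rw [div_div_div_eq, div_eq_div_iff (by positivity) (by positivity)]
  ring

theorem gammaRatioIntegral_nonneg (x : ℝ) : 0 ≤ gammaRatioIntegral x :=
  setIntegral_nonneg measurableSet_Ioi fun t (ht : 0 < t) ↦ by
    have := tanh_nonneg ht.le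
    positivity

theorem gammaRatioIntegral_le {x : ℝ} (hx : 1 / 2 < x) :
    gammaRatioIntegral x ≤ (4 * x - 2)⁻¹ := by
  have hs : 0 < 4 * x - 2 := by linarith
  calc gammaRatioIntegral x ≤ ∫ t in Ioi 0, exp (-(4 * x - 2) * t) := by
        refine setIntegral_mono_on (integrableOn_gammaRatioIntegrand hx)
          (exp_neg_integrableOn_Ioi 0 hs) measurableSet_Ioi fun t (ht : 0 < t) ↦ ?_
        rw [mul_div_assoc]
        exact mul_le_of_le_one_right (exp_pos _).le
          (by simpa using tanh_pow_div_le_one one_ne_zero ht)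
    _ = (4 * x - 2)⁻¹ := by
        rw [integral_exp_mul_Ioi (by linarith) 0]
        field_simp
        simp

theorem tendsto_gammaRatioIntegral_atTop : Tendsto gammaRatioIntegral atTop (𝓝 0) := by
  have h : Tendsto (fun x : ℝ ↦ (4 * x - 2)⁻¹) atTop (𝓝 0) :=
    tendsto_inv_atTop_zero.comp
      (tendsto_atTop_add_const_right _ _ (tendsto_id.const_mul_atTop four_pos))
  refine squeeze_zero' (.of_forall gammaRatioIntegral_nonneg) ?_ h
  filter_upwards [eventually_gt_atTop (1 / 2)] with x hx using gammaRatioIntegral_le hx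

theorem log_gammaRatio_natCast {k : ℕ} (hk : 1 ≤ k) :
    log (gammaRatio k) = gammaRatioIntegral k := by
  set d : ℕ → ℝ := fun n ↦ log (gammaRatio (n + 1)) - gammaRatioIntegral (n + 1) with hd
  have hstep (n : ℕ) : d (n + 1) = d n := by
    have hx : (1 / 2 : ℝ) < n + 1 := by linarith [(n.cast_nonneg : (0 : ℝ) ≤ n)]
    have h₁ := log_gammaRatio_sub_log_gammaRatio_add_one hx
    have h₂ := gammaRatioIntegral_sub_gammaRatioIntegral_add_one hx
    simp only [hd, Nat.cast_succ]
    linarith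
  have hconst : d = fun _ ↦ d 0 := funext fun n ↦ Nat.rec rfl (fun n ih ↦ (hstep n).trans ih) n
  have hlim : Tendsto d atTop (𝓝 0) := by
    simpa using (tendsto_gammaRatio_natCast_add_one.log one_ne_zero).sub
      (tendsto_gammaRatioIntegral_atTop.comp
        (tendsto_atTop_add_const_right _ 1 tendsto_natCast_atTop_atTop))
  have hd0 : d 0 = 0 := tendsto_const_nhds_iff.1 (hconst ▸ hlim)
  obtain ⟨n, rfl⟩ := Nat.exists_eq_add_of_le' hk
  have := congrFun hconst n
  simp only [hd, Nat.cast_succ] at this hd0 ⊢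
  linarith

theorem sum_exp_neg_mul_mul_tanh (N : ℕ) (t : ℝ) :
    ∑ k ∈ Finset.Icc 1 N, exp (-(4 * k - 2) * t) * tanh t
      = (1 - exp (-(4 * N) * t)) / (4 * cosh t ^ 2) := by
  induction N with
  | zero => simp
  | succ N ih =>
    rw [Finset.sum_Icc_succ_top (by omega), ih,
      show -(4 * ((N + 1 : ℕ) : ℝ) - 2) = -(4 * N + 2) by push_cast; ring,
      exp_neg_mul_mul_tanh, ← add_div]
    push_cast
    ring_nf

/- `e^{-4t} - 1 / cosh² t = e^{-4t} tanh² t - 4 e^{-2t} tanh t`, and both terms on the right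
are integrable against `dt / t`. -/
theorem integrableOn_exp_neg_four_mul_sub_one_div_cosh_sq_div :
    IntegrableOn (fun t ↦ 1 / t * (exp (-4 * t) - 1 / cosh t ^ 2)) (Ioi 0) := by
  have h₁ := integrableOn_exp_neg_mul_mul_tanh_pow_div four_pos two_ne_zero
  have h₂ := integrableOn_exp_neg_mul_mul_tanh_pow_div two_pos one_ne_zero
  refine (h₁.sub (h₂.const_mul 4)).congr_fun (fun t _ ↦ ?_) measurableSet_Ioi
  have h : exp (-2 * t) * tanh t = (1 - exp (-4 * t)) * (1 / cosh t ^ 2) / 4 := by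
    simpa [div_eq_mul_inv, mul_comm, mul_left_comm, mul_assoc] using exp_neg_mul_mul_tanh 0 t
  simp only [Pi.sub_apply, pow_one, mul_div_assoc', h, one_div_cosh_sq]
  ring

theorem sum_gammaRatioIntegral_sub_log {N : ℕ} (hN : 1 ≤ N) :
    ∑ k ∈ Finset.Icc 1 N, gammaRatioIntegral k - 1 / 4 * log N
        + 1 / 4 * ∫ t in Ioi 0, 1 / t * (exp (-4 * t) - 1 / cosh t ^ 2)
      = 1 / 4 * ∫ t in Ioi 0, exp (-(4 * N) * t) * tanh t ^ 2 / t := by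
  have hN' : (0 : ℝ) < 4 * N := by positivity
  have hint : ∀ k ∈ Finset.Icc 1 N,
      IntegrableOn (fun t ↦ exp (-(4 * k - 2) * t) * tanh t / t) (Ioi 0) := fun k hk ↦
    integrableOn_gammaRatioIntegrand <| by
      have : (1 : ℝ) ≤ k := by exact_mod_cast (Finset.mem_Icc.1 hk).1
      linarith
  have hsum : ∑ k ∈ Finset.Icc 1 N, gammaRatioIntegral k
      = ∫ t in Ioi 0, ∑ k ∈ Finset.Icc 1 N, exp (-(4 * k - 2) * t) * tanh t / t :=
    (integral_finsetSum _ hint).symm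
  have hlog : log N = ∫ t in Ioi 0, (exp (-4 * t) - exp (-(4 * N) * t)) / t := by
    rw [integral_exp_neg_mul_sub_exp_neg_mul_div four_pos hN', mul_div_cancel_left₀ _ four_ne_zero]
  have hpt (t : ℝ) : ∑ k ∈ Finset.Icc 1 N, exp (-(4 * k - 2) * t) * tanh t / t
        - 1 / 4 * ((exp (-4 * t) - exp (-(4 * N) * t)) / t)
        + 1 / 4 * (1 / t * (exp (-4 * t) - 1 / cosh t ^ 2))
      = 1 / 4 * (exp (-(4 * N) * t) * tanh t ^ 2 / t) := by
    rw [← Finset.sum_div, sum_exp_neg_mul_mul_tanh,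
      show ∀ a : ℝ, a / (4 * cosh t ^ 2) = a * (1 / cosh t ^ 2) / 4 from fun a ↦ by ring,
      one_div_cosh_sq]
    ring
  have hF := (integrableOn_exp_neg_mul_sub_exp_neg_mul_div four_pos hN').const_mul (1 / 4)
  have hC := integrableOn_exp_neg_four_mul_sub_one_div_cosh_sq_div.const_mul (1 / 4)
  rw [hsum, hlog, ← integral_const_mul, ← integral_const_mul, ← integral_const_mul,
    ← integral_sub (integrable_finsetSum _ hint) hF, ← integral_add _ hC]
  · simp only [hpt]
  · exact (integrable_finsetSum _ hint).sub hF

theorem tendsto_sq_mul_integral_exp_neg_mul_mul_tanh_sq_div :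
    Tendsto (fun s ↦ s ^ 2 * ∫ t in Ioi 0, exp (-s * t) * tanh t ^ 2 / t) atTop (𝓝 1) := by
  have hscale (s : ℝ) (hs : 0 < s) : s ^ 2 * ∫ t in Ioi 0, exp (-s * t) * tanh t ^ 2 / t
      = ∫ u in Ioi 0, exp (-u) * (s * tanh (u / s)) ^ 2 / u := by
    have h := integral_comp_mul_div_Ioi (fun u ↦ exp (-u) * tanh (u / s) ^ 2) hs
    simp only [mul_div_cancel_left₀ _ hs.ne', ← neg_mul] at h
    rw [h, ← integral_const_mul]
    congr with u
    ring
  have hlim : ∀ u ∈ Ioi (0 : ℝ),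
      Tendsto (fun s ↦ exp (-u) * (s * tanh (u / s)) ^ 2 / u) atTop (𝓝 (exp (-u) * u)) := by
    intro u (hu : 0 < u)
    have h := (((tendsto_mul_tanh_div_atTop u).pow 2).const_mul (exp (-u))).div_const u
    rwa [show exp (-u) * u ^ 2 / u = exp (-u) * u by field_simp] at h
  have hdct := tendsto_integral_filter_of_dominated_convergence (μ := volume.restrict (Ioi 0))
    (F := fun s u ↦ exp (-u) * (s * tanh (u / s)) ^ 2 / u) _
    (.of_forall fun s ↦ ((Continuous.continuousOn (by fun_prop)).div continuousOn_id
      fun u hu ↦ ne_of_gt hu).aestronglyMeasurable measurableSet_Ioi)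
    ((eventually_gt_atTop 0).mono fun s hs ↦ (ae_restrict_iff' measurableSet_Ioi).2
      (ae_of_all _ fun u (hu : 0 < u) ↦ ?_))
    integrableOn_exp_neg_mul_self ((ae_restrict_iff' measurableSet_Ioi).2 (ae_of_all _ hlim))
  · rw [integral_exp_neg_mul_self] at hdct
    exact hdct.congr' ((eventually_gt_atTop 0).mono fun s hs ↦ (hscale s hs).symm)
  · have := tanh_nonneg (div_pos hu hs).le
    rw [norm_of_nonneg (by positivity), div_le_iff₀ hu]
    calc exp (-u) * (s * tanh (u / s)) ^ 2 ≤ exp (-u) * u ^ 2 := by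
          gcongr
          exact mul_tanh_div_le hs hu.le
      _ = exp (-u) * u * u := by ring

/-- Second-order asymptotics of `φ_N = -∑_{k=1}^N log(Γ(k)²/(Γ(k-1/2)Γ(k+1/2)))`:
with `C = -(1/4)∫_0^∞ (1/t)(e^{-4t} - cosh⁻²t) dt`, one has
`lim N²(φ_N - (1/4) log N - C) = 1/64`. -/
theorem stmt16 (φ : ℕ → ℝ)
    (hφ : ∀ N : ℕ, φ N = -∑ k ∈ Finset.Icc 1 N,
      Real.log (Real.Gamma (k : ℝ) ^ 2 /
        (Real.Gamma ((k : ℝ) - 1 / 2) * Real.Gamma ((k : ℝ) + 1 / 2))))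
    (C : ℝ)
    (hC : C = -(1 / 4) *
      ∫ t in Set.Ioi (0 : ℝ), (1 / t) * (Real.exp (-4 * t) - 1 / Real.cosh t ^ 2)) :
    Tendsto (fun N : ℕ => (N : ℝ) ^ 2 * (φ N - (1 / 4) * Real.log N - C)) atTop
      (nhds (1 / 64)) := by
  have hφ' (N : ℕ) : φ N = ∑ k ∈ Finset.Icc 1 N, gammaRatioIntegral k := by
    rw [hφ, ← Finset.sum_neg_distrib]
    refine Finset.sum_congr rfl fun k hk ↦ ?_
    rw [← log_gammaRatio_natCast (Finset.mem_Icc.1 hk).1, ← log_inv, inv_div, gammaRatio]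
  have hlim := (tendsto_sq_mul_integral_exp_neg_mul_mul_tanh_sq_div.comp
    (tendsto_natCast_atTop_atTop.const_mul_atTop four_pos)).const_mul (1 / 64)
  rw [mul_one] at hlim
  refine hlim.congr' ((eventually_ge_atTop 1).mono fun N hN ↦ ?_)
  simp only [Function.comp_apply, hφ', hC]
  linear_combination (-(N : ℝ) ^ 2) * sum_gammaRatioIntegral_sub_log hN
end
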